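/- arXiv:1502.06667 — 2 statements merged into one kernel-verified Lean document; each statement's English description precedes it below -/
import Mathlib

section
/- Any channel-selection profile that maximizes the potential function Φ over all profiles is a pure strategy Nash equilibrium of the spectrum access graphical game. -/
open Finset

/-- Number of neighbors of player `n` choosing the same channel as `n`. -/
def cCount {N M : ℕ} (G : SimpleGraph (Fin N)) [DecidableRel G.Adj]
    (a : Fin N → Fin M) (n : Fin N) : ℕ :=
  (Finset.univ.filter (fun k => G.Adj n k ∧ a k = a n)).card

/-- Utility of player `n`: expected rate divided by `1 + cCount`. -/
noncomputable def utility {N M : ℕ} (G : SimpleGraph (Fin N)) [DecidableRel G.Adj]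
    (sbar : ℝ) (a : Fin N → Fin M) (n : Fin N) : ℝ :=
  sbar / (1 + (cCount G a n : ℝ))

/-- Potential function: negative aggregate same-channel-neighbor count. -/
def potential {N M : ℕ} (G : SimpleGraph (Fin N)) [DecidableRel G.Adj]
    (a : Fin N → Fin M) : ℤ :=
  - ∑ n : Fin N, (cCount G a n : ℤ)

lemma cCount_eq_sum {N M : ℕ} (G : SimpleGraph (Fin N)) [DecidableRel G.Adj]
    (a : Fin N → Fin M) (n : Fin N) :
    (cCount G a n : ℤ) = ∑ j : Fin N, (if G.Adj n j ∧ a j = a n then (1:ℤ) else 0) := by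
  rw [cCount, Finset.card_filter]
  push_cast
  rfl

lemma total_decomp {N M : ℕ} (G : SimpleGraph (Fin N)) [DecidableRel G.Adj]
    (a : Fin N → Fin M) (n : Fin N) :
    ∑ k : Fin N, (cCount G a k : ℤ)
      = (∑ k ∈ univ.erase n, ∑ j ∈ univ.erase n,
          (if G.Adj k j ∧ a j = a k then (1:ℤ) else 0))
        + 2 * (cCount G a n : ℤ) := by
  set f : Fin N → Fin N → ℤ := fun k j => if G.Adj k j ∧ a j = a k then (1:ℤ) else 0 with hf
  have hnn : f n n = 0 := by simp [hf]
  have hsymm : ∀ k, f k n = f n k := by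
    intro k
    simp only [hf]
    refine if_congr ?_ rfl rfl
    constructor
    · rintro ⟨h1, h2⟩; exact ⟨h1.symm, h2.symm⟩
    · rintro ⟨h1, h2⟩; exact ⟨h1.symm, h2.symm⟩
  have hc : (cCount G a n : ℤ) = ∑ j : Fin N, f n j := cCount_eq_sum G a n
  have hrow : ∀ k, (cCount G a k : ℤ) = ∑ j : Fin N, f k j := fun k => cCount_eq_sum G a k
  calc ∑ k : Fin N, (cCount G a k : ℤ)
      = ∑ k : Fin N, ∑ j : Fin N, f k j := by
        exact Finset.sum_congr rfl (fun k _ => hrow k)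
    _ = (∑ j : Fin N, f n j) + ∑ k ∈ univ.erase n, ∑ j : Fin N, f k j := by
        rw [← Finset.add_sum_erase _ _ (Finset.mem_univ n)]
    _ = (∑ j : Fin N, f n j)
        + ∑ k ∈ univ.erase n, (f k n + ∑ j ∈ univ.erase n, f k j) := by
        congr 1
        refine Finset.sum_congr rfl (fun k _ => ?_)
        rw [← Finset.add_sum_erase _ _ (Finset.mem_univ n)]
    _ = (∑ j : Fin N, f n j) + (∑ k ∈ univ.erase n, f k n)
        + ∑ k ∈ univ.erase n, ∑ j ∈ univ.erase n, f k j := by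
        rw [Finset.sum_add_distrib]; ring
    _ = (∑ j : Fin N, f n j) + (∑ k ∈ univ.erase n, f n k)
        + ∑ k ∈ univ.erase n, ∑ j ∈ univ.erase n, f k j := by
        congr 1
        congr 1
        exact Finset.sum_congr rfl (fun k _ => hsymm k)
    _ = (∑ j : Fin N, f n j) + (∑ k : Fin N, f n k)
        + ∑ k ∈ univ.erase n, ∑ j ∈ univ.erase n, f k j := by
        congr 2
        rw [← Finset.add_sum_erase _ _ (Finset.mem_univ n), hnn, zero_add]
    _ = (∑ k ∈ univ.erase n, ∑ j ∈ univ.erase n, f k j) + 2 * (cCount G a n : ℤ) := by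
        rw [hc]; ring

lemma offpart_update {N M : ℕ} (G : SimpleGraph (Fin N)) [DecidableRel G.Adj]
    (a : Fin N → Fin M) (n : Fin N) (b : Fin M) :
    (∑ k ∈ univ.erase n, ∑ j ∈ univ.erase n,
        (if G.Adj k j ∧ (Function.update a n b) j = (Function.update a n b) k then (1:ℤ) else 0))
    = ∑ k ∈ univ.erase n, ∑ j ∈ univ.erase n,
        (if G.Adj k j ∧ a j = a k then (1:ℤ) else 0) := by
  refine Finset.sum_congr rfl (fun k hk => Finset.sum_congr rfl (fun j hj => ?_))
  have hk' : k ≠ n := Finset.ne_of_mem_erase hk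
  have hj' : j ≠ n := Finset.ne_of_mem_erase hj
  rw [Function.update_of_ne hk', Function.update_of_ne hj']

/-- any maximizer of the potential function is a pure strategy
Nash equilibrium. -/
theorem potential_maximizer_is_NE {N M : ℕ} (G : SimpleGraph (Fin N)) [DecidableRel G.Adj]
    (sbar : ℝ) (hs : 0 < sbar) (a : Fin N → Fin M)
    (hmax : ∀ b : Fin N → Fin M, potential G b ≤ potential G a) :
    ∀ (n : Fin N) (b : Fin M),
      utility G sbar a n ≥ utility G sbar (Function.update a n b) n := by
  intro n b
  set a' := Function.update a n b with ha'
  have hpot : potential G a' ≤ potential G a := hmax a'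
  have hsum : ∑ k : Fin N, (cCount G a k : ℤ) ≤ ∑ k : Fin N, (cCount G a' k : ℤ) := by
    simpa [potential, neg_le_neg_iff] using hpot
  have hd := total_decomp G a n
  have hd' := total_decomp G a' n
  have hoff := offpart_update G a n b
  have hle : (cCount G a n : ℤ) ≤ (cCount G a' n : ℤ) := by
    rw [hd, hd'] at hsum
    rw [hoff] at hsum
    linarith
  have hle' : (cCount G a n : ℝ) ≤ (cCount G a' n : ℝ) := by exact_mod_cast hle
  unfold utility
  apply div_le_div_of_nonneg_left hs.le
  · positivity
  · linarith
end

section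
/- For any player n, any channel-selection profile a, and any alternative channel a*_n, the change in the potential function caused by player n unilaterally switching from a_n to a*_n equals twice the decrease in player n's own same-channel neighbor count: Φ(a*_n, a_{−n}) − Φ(a) = 2·(c_n(a) − c_n(a*_n, a_{−n})). -/
open Finset

section Aux

variable {N M : ℕ} (G : SimpleGraph (Fin N)) [DecidableRel G.Adj]

/-- indicator -/
private def Find (b : Fin N → Fin M) (m k : Fin N) : ℤ :=
  if G.Adj m k ∧ b k = b m then 1 else 0

private lemma cCount_eq_sum_s6 (b : Fin N → Fin M) (m : Fin N) :
    (cCount G b m : ℤ) = ∑ k, Find G b m k := by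
  unfold cCount Find
  rw [Finset.card_filter]
  push_cast
  rfl

private lemma Find_symm (b : Fin N → Fin M) (m k : Fin N) :
    Find G b m k = Find G b k m := by
  unfold Find
  congr 1
  rw [eq_iff_iff]
  constructor <;> rintro ⟨h1, h2⟩ <;> exact ⟨h1.symm, h2.symm⟩

private lemma Find_self (b : Fin N → Fin M) (m : Fin N) : Find G b m m = 0 := by
  simp [Find, G.irrefl]

private lemma sum_cCount (b : Fin N → Fin M) (n : Fin N) :
    ∑ m, (cCount G b m : ℤ) =
      (∑ m ∈ univ.erase n, ∑ k ∈ univ.erase n, Find G b m k)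
        + 2 * (cCount G b n : ℤ) := by
  have key : ∀ m, ∑ k, Find G b m k = Find G b m n + ∑ k ∈ univ.erase n, Find G b m k := by
    intro m
    rw [← Finset.add_sum_erase _ _ (Finset.mem_univ n)]
  calc ∑ m, (cCount G b m : ℤ) = ∑ m, ∑ k, Find G b m k := by
        simp [cCount_eq_sum_s6]
    _ = ∑ m, (Find G b m n + ∑ k ∈ univ.erase n, Find G b m k) := by
        exact Finset.sum_congr rfl fun m _ => key m
    _ = ∑ m, Find G b m n + ∑ m, ∑ k ∈ univ.erase n, Find G b m k := by
        rw [Finset.sum_add_distrib]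
    _ = ∑ m, Find G b n m +
        (∑ k ∈ univ.erase n, Find G b n k
          + ∑ m ∈ univ.erase n, ∑ k ∈ univ.erase n, Find G b m k) := by
        rw [← Finset.add_sum_erase _ (fun m => ∑ k ∈ univ.erase n, Find G b m k)
          (Finset.mem_univ n)]
        congr 1
        exact Finset.sum_congr rfl fun m _ => Find_symm G b m n
    _ = (∑ m ∈ univ.erase n, ∑ k ∈ univ.erase n, Find G b m k)
        + 2 * (cCount G b n : ℤ) := by
        rw [cCount_eq_sum_s6 G b n]
        have : ∑ k ∈ univ.erase n, Find G b n k = ∑ k, Find G b n k - Find G b n n := by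
          rw [← Finset.add_sum_erase _ _ (Finset.mem_univ n)]; ring
        rw [this, Find_self]
        ring

end Aux

/-- the potential change from a unilateral switch of player n
equals twice the decrease in n's own same-channel-neighbor count. -/
theorem potential_change_eq {N M : ℕ} (G : SimpleGraph (Fin N)) [DecidableRel G.Adj]
    (a : Fin N → Fin M) (n : Fin N) (aStar : Fin M) :
    potential G (Function.update a n aStar) - potential G a =
      2 * ((cCount G a n : ℤ) - (cCount G (Function.update a n aStar) n : ℤ)) := by
  unfold potential
  rw [sum_cCount G a n, sum_cCount G (Function.update a n aStar) n]
  have hI : ∑ m ∈ univ.erase n, ∑ k ∈ univ.erase n, Find G (Function.update a n aStar) m k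
      = ∑ m ∈ univ.erase n, ∑ k ∈ univ.erase n, Find G a m k := by
    refine Finset.sum_congr rfl fun m hm => Finset.sum_congr rfl fun k hk => ?_
    unfold Find
    rw [Function.update_of_ne (Finset.ne_of_mem_erase hk),
        Function.update_of_ne (Finset.ne_of_mem_erase hm)]
  rw [hI]
  ring
end
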